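/- arXiv:2010.16000 — 8 statements merged into one kernel-verified Lean document; each statement's English description precedes it below -/
import Mathlib

section
/- Let ξ₁, ξ₂, … be i.i.d. random variables with P(ξ₁ = -1) = P(ξ₁ = +1) = 1/2, and let φₙ : {-1,+1}ⁿ → {-1,+1} be functions. Define ηₙ = φₙ(ξ₁,…,ξₙ). Then the sequence (ηₙ) has the same joint distribution as (ξₙ) if and only if each φₙ can be written as φₙ(u₁,…,uₙ) = ψₙ₋₁(u₁,…,uₙ₋₁)·uₙ for some function ψₙ₋₁ : {-1,+1}ⁿ⁻¹ → {-1,+1} (with ψ₀ a constant in {-1,+1}). -/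
/-!
The vector `(ξ₁, …, ξₙ)` is uniform on `{±1}ⁿ`, and `(η₁, …, ηₙ)` is its image under the
prefix transform `u ↦ (φ₁(u₁), φ₂(u₁, u₂), …, φₙ(u₁, …, uₙ))`. A self-map of a finite set preserves
the uniform measure iff it is injective there, since a point outside its image would get mass zero.
By induction on `n`, these maps are all injective iff every section `a ↦ φₙ(v, a)` is
injective on `{±1}`, i.e. `φₙ(v, -1) = -φₙ(v, 1)`; that is the factorization with
`ψₙ₋₁(v) = φₙ(v, 1)`.
-/

open MeasureTheory ProbabilityTheory Set

namespace ProbabilityTheory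

variable {Ω : Type*} [MeasurableSpace Ω] [MeasurableSingletonClass Ω] {s : Set Ω}

lemma eq_uniformOn_of_measure_singleton [Countable Ω] {ν : Measure Ω} [IsProbabilityMeasure ν]
    (hs : s.Finite) (hs' : s.Nonempty) (h : ∀ a ∈ s, ν {a} = (Measure.count s)⁻¹) :
    ν = uniformOn s := by
  have huniform : ∀ a ∈ s, uniformOn s {a} = (Measure.count s)⁻¹ := fun a ha ↦ by
    rw [uniformOn, cond_apply hs.measurableSet, inter_singleton_of_mem ha,
      Measure.count_singleton, mul_one]
  have hrestrict : ν.restrict s = (uniformOn s).restrict s := by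
    refine Measure.ext_of_singleton fun a ↦ ?_
    simp only [Measure.restrict_apply (measurableSet_singleton a)]
    by_cases ha : a ∈ s
    · rw [singleton_inter_of_mem ha, h a ha, huniform a ha]
    · rw [singleton_inter_eq_empty.2 ha, measure_empty, measure_empty]
  have hνs : ν s = 1 := by
    rw [← Measure.restrict_apply_self, hrestrict, Measure.restrict_apply_self, uniformOn_self hs hs']
  refine Measure.ext_of_singleton fun a ↦ ?_
  by_cases ha : a ∈ s
  · rw [h a ha, huniform a ha]
  · rw [(uniformOn_eq_zero_iff hs).2 (inter_singleton_eq_empty.2 ha)]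
    exact measure_mono_null (singleton_subset_iff.2 ha)
      ((prob_compl_eq_zero_iff hs.measurableSet).2 hνs)

lemma map_uniformOn_eq_self_iff_injOn {f : Ω → Ω} (hf : Measurable f) (hs : s.Finite)
    (hmaps : MapsTo f s s) : (uniformOn s).map f = uniformOn s ↔ InjOn f s := by
  rw [hs.injOn_iff_bijOn_of_mapsTo hmaps]
  constructor
  · intro h
    refine (hs.surjOn_iff_bijOn_of_mapsTo hmaps).1 fun w hw ↦ ?_
    have hfiber : uniformOn s (f ⁻¹' {w}) ≠ 0 := by
      rw [← Measure.map_apply hf (measurableSet_singleton w), h, Ne, uniformOn_eq_zero_iff hs,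
        inter_singleton_of_mem hw]
      exact singleton_ne_empty w
    obtain ⟨x, hx, hfx⟩ := nonempty_iff_ne_empty.2 <| (uniformOn_eq_zero_iff hs).not.1 hfiber
    exact ⟨x, hx, hfx⟩
  · intro hbij
    ext t ht
    have hinter : MeasurableSet (s ∩ f ⁻¹' t) := hs.measurableSet.inter (hf ht)
    rw [Measure.map_apply hf ht, uniformOn, cond_apply hs.measurableSet,
      cond_apply hs.measurableSet, Measure.count_apply hinter,
      ← (hbij.injOn.mono inter_subset_left).encard_image, image_inter_preimage, hbij.image_eq,
      Measure.count_apply (hs.measurableSet.inter ht)]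

lemma uniformOn_pi_of_finite {ι : Type*} [Fintype ι] {f : ι → Set Ω} (hf : ∀ i, (f i).Finite) :
    uniformOn (univ.pi f) = Measure.pi fun i ↦ uniformOn (f i) := by
  refine (Measure.pi_eq fun t _ ↦ ?_).symm
  obtain ⟨g, hg⟩ : ∃ g : ι → Finset Ω, ∀ i, (g i : Set Ω) = f i ∩ t i :=
    ⟨fun i ↦ ((hf i).inter_of_left (t i)).toFinset, by simp⟩
  rw [← uniformOn_inter_self (Finite.pi hf), ← pi_inter_distrib,
    Finset.prod_congr rfl fun i _ ↦ (uniformOn_inter_self (hf i)).symm]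
  simp_rw [← hg]
  lift f to ι → Finset Ω using hf
  classical
  simp [← Fintype.coe_piFinset, uniformOn_apply_finset, ← Fintype.piFinset_inter,
    ENNReal.prod_div_distrib_of_ne_top]

lemma iIndepFun.map_fun_eq_uniformOn_pi {Ω' ι : Type*} [MeasurableSpace Ω'] [Fintype ι]
    {μ : Measure Ω'} [IsProbabilityMeasure μ] {X : ι → Ω' → Ω} {f : ι → Set Ω}
    (hf : ∀ i, (f i).Finite) (hX : ∀ i, Measurable (X i)) (hindep : iIndepFun X μ)
    (hlaw : ∀ i, μ.map (X i) = uniformOn (f i)) :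
    μ.map (fun ω i ↦ X i ω) = uniformOn (univ.pi f) := by
  rw [hindep.map_fun_eq_pi_map fun i ↦ (hX i).aemeasurable, uniformOn_pi_of_finite hf]
  simp_rw [hlaw]

end ProbabilityTheory

lemma map_eq_uniformOn_of_measure_eq_half {Ω : Type*} [MeasurableSpace Ω] {μ : Measure Ω}
    [IsProbabilityMeasure μ] {X : Ω → ℤ} (hX : Measurable X)
    (h : μ {ω | X ω = 1} = 1 / 2 ∧ μ {ω | X ω = -1} = 1 / 2) :
    μ.map X = uniformOn {1, -1} := by
  have := Measure.isProbabilityMeasure_map hX.aemeasurable (μ := μ)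
  have hcount : (Measure.count ({1, -1} : Set ℤ))⁻¹ = 1 / 2 := by
    rw [Measure.count_apply (toFinite _).measurableSet, encard_pair (by norm_num), one_div]; rfl
  refine eq_uniformOn_of_measure_singleton (toFinite _) (insert_nonempty _ _) fun a ha ↦ ?_
  rw [Measure.map_apply hX (measurableSet_singleton a), hcount]
  rcases ha with rfl | rfl
  exacts [h.1, h.2]

section PrefixTransform

variable {α : Type*} (φ : (n : ℕ) → (Fin (n + 1) → α) → α)

def prefixTransform (n : ℕ) (u : Fin n → α) : Fin n → α :=
  fun i ↦ φ i fun j ↦ u (Fin.castLE i.isLt j)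

lemma prefixTransform_succ (n : ℕ) (u : Fin (n + 1) → α) :
    prefixTransform φ (n + 1) u = Fin.snoc (prefixTransform φ n (Fin.init u)) (φ n u) := by
  funext i
  refine Fin.lastCases ?_ (fun i ↦ ?_) i
  · rw [Fin.snoc_last]; rfl
  · rw [Fin.snoc_castSucc]; rfl

variable {φ} {s : Set α}

lemma mapsTo_prefixTransform (hφ : ∀ n, MapsTo (φ n) (univ.pi fun _ ↦ s) s) (n : ℕ) :
    MapsTo (prefixTransform φ n) (univ.pi fun _ ↦ s) (univ.pi fun _ ↦ s) :=
  fun _ hu i _ ↦ hφ i fun _ _ ↦ hu _ trivial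

lemma snoc_mem_univ_pi {n : ℕ} {v : Fin n → α} {a : α} :
    (Fin.snoc v a : Fin (n + 1) → α) ∈ univ.pi (fun _ ↦ s) ↔
      v ∈ univ.pi (fun _ ↦ s) ∧ a ∈ s := by
  simp [Fin.forall_iff_castSucc, and_comm]

lemma injOn_prefixTransform_iff :
    (∀ n, InjOn (prefixTransform φ n) (univ.pi fun _ ↦ s)) ↔
      ∀ n, ∀ v ∈ univ.pi (fun _ : Fin n ↦ s), InjOn (fun a ↦ φ n (Fin.snoc v a)) s := by
  constructor
  · intro h n v hv a ha b hb hab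
    have key := h (n + 1) (snoc_mem_univ_pi.2 ⟨hv, ha⟩) (snoc_mem_univ_pi.2 ⟨hv, hb⟩)
      (by simp only [prefixTransform_succ, Fin.init_snoc]; exact congrArg _ hab)
    simpa using congrFun key (Fin.last n)
  · intro h n
    induction n with
    | zero => exact fun _ _ _ _ _ ↦ Subsingleton.elim _ _
    | succ n ih =>
      intro u hu u' hu' huu'
      rw [prefixTransform_succ, prefixTransform_succ, Fin.snoc_inj] at huu'
      have hinit : Fin.init u = Fin.init u' :=
        ih (fun i _ ↦ hu _ trivial) (fun i _ ↦ hu' _ trivial) huu'.1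
      have hlast : u (Fin.last n) = u' (Fin.last n) := by
        refine h n (Fin.init u) (fun i _ ↦ hu _ trivial) (hu _ trivial) (hu' _ trivial) ?_
        dsimp only
        rw [Fin.snoc_init_self, hinit, Fin.snoc_init_self]
        exact huu'.2
      rw [← Fin.snoc_init_self u, ← Fin.snoc_init_self u', hinit, hlast]

end PrefixTransform

lemma injOn_one_neg_one_iff {g : ℤ → ℤ} (hg : MapsTo g {1, -1} {1, -1}) :
    InjOn g {1, -1} ↔ ∀ a ∈ ({1, -1} : Set ℤ), g a = g 1 * a := by
  have h1 : g 1 = 1 ∨ g 1 = -1 := hg (by simp)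
  have h2 : g (-1) = 1 ∨ g (-1) = -1 := hg (by simp)
  rw [injOn_pair]
  rcases h1 with h1 | h1 <;> rcases h2 with h2 | h2 <;> simp [h1, h2]

lemma exists_mul_last_iff {φ : (n : ℕ) → (Fin (n + 1) → ℤ) → ℤ}
    (hφ : ∀ n, MapsTo (φ n) (univ.pi fun _ ↦ {1, -1}) {1, -1}) :
    (∃ ψ : (n : ℕ) → (Fin n → ℤ) → ℤ, (∀ n, MapsTo (ψ n) (univ.pi fun _ ↦ {1, -1}) {1, -1}) ∧
        ∀ n, ∀ u ∈ univ.pi (fun _ ↦ {1, -1}), φ n u = ψ n (Fin.init u) * u (Fin.last n)) ↔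
      ∀ n, ∀ v ∈ univ.pi (fun _ : Fin n ↦ ({1, -1} : Set ℤ)), ∀ a ∈ ({1, -1} : Set ℤ),
        φ n (Fin.snoc v a) = φ n (Fin.snoc v 1) * a := by
  constructor
  · rintro ⟨ψ, -, hform⟩ n v hv a ha
    rw [hform n _ (snoc_mem_univ_pi.2 ⟨hv, ha⟩), hform n _ (snoc_mem_univ_pi.2 ⟨hv, by simp⟩)]
    simp
  · intro h
    refine ⟨fun n v ↦ φ n (Fin.snoc v 1), fun n v hv ↦ hφ n (snoc_mem_univ_pi.2 ⟨hv, by simp⟩),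
      fun n u hu ↦ ?_⟩
    have hinit : Fin.init u ∈ univ.pi (fun _ ↦ ({1, -1} : Set ℤ)) := fun i _ ↦ hu _ trivial
    simpa only [Fin.snoc_init_self] using h n _ hinit _ (hu (Fin.last n) trivial)

theorem stmt0 {Ω : Type*} [MeasurableSpace Ω] (μ : Measure Ω) [IsProbabilityMeasure μ]
    (ξ : ℕ → Ω → ℤ) (hmeas : ∀ n, Measurable (ξ n))
    (hindep : iIndepFun ξ μ)
    (hdist : ∀ n, μ {ω | ξ n ω = 1} = 1/2 ∧ μ {ω | ξ n ω = -1} = 1/2)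
    (φ : (n : ℕ) → (Fin (n + 1) → ℤ) → ℤ)
    (hφ : ∀ n (u : Fin (n + 1) → ℤ), (∀ i, u i = 1 ∨ u i = -1) →
      φ n u = 1 ∨ φ n u = -1)
    (η : ℕ → Ω → ℤ) (hη : ∀ n ω, η n ω = φ n (fun i => ξ i.val ω)) :
    (∀ n : ℕ, Measure.map (fun ω (i : Fin n) => η i.val ω) μ
        = Measure.map (fun ω (i : Fin n) => ξ i.val ω) μ)
      ↔ ∃ ψ : (n : ℕ) → (Fin n → ℤ) → ℤ,
          (∀ n (v : Fin n → ℤ), (∀ i, v i = 1 ∨ v i = -1) →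
            ψ n v = 1 ∨ ψ n v = -1) ∧
          ∀ n (u : Fin (n + 1) → ℤ), (∀ i, u i = 1 ∨ u i = -1) →
            φ n u = ψ n (fun i => u i.castSucc) * u (Fin.last n) := by
  set s : Set ℤ := {1, -1}
  have hcube : ∀ n (u : Fin n → ℤ), u ∈ univ.pi (fun _ ↦ s) ↔ ∀ i, u i = 1 ∨ u i = -1 := by
    simp [s]
  simp only [← hcube] at hφ ⊢
  have hlaw : ∀ n, μ.map (fun ω (i : Fin n) ↦ ξ i ω) = uniformOn (univ.pi fun _ ↦ s) :=
    fun n ↦ (hindep.precomp Fin.val_injective).map_fun_eq_uniformOn_pi (fun _ ↦ toFinite s)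
      (fun i ↦ hmeas i) fun i ↦ map_eq_uniformOn_of_measure_eq_half (hmeas i) (hdist i)
  have hηlaw : ∀ n, μ.map (fun ω (i : Fin n) ↦ η i ω)
      = (uniformOn (univ.pi fun _ ↦ s)).map (prefixTransform φ n) := by
    intro n
    rw [← hlaw, Measure.map_map (Measurable.of_discrete (f := prefixTransform φ n))
      (measurable_pi_lambda _ fun i : Fin n ↦ hmeas i)]
    congr 1
    ext ω i
    exact hη i ω
  calc (∀ n, μ.map (fun ω (i : Fin n) ↦ η i ω) = μ.map (fun ω (i : Fin n) ↦ ξ i ω))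
      ↔ ∀ n, InjOn (prefixTransform φ n) (univ.pi fun _ ↦ s) := forall_congr' fun n ↦ by
        rw [hηlaw, hlaw]
        exact map_uniformOn_eq_self_iff_injOn .of_discrete (Finite.pi fun _ ↦ toFinite s)
          (mapsTo_prefixTransform hφ n)
    _ ↔ ∀ n, ∀ v ∈ univ.pi (fun _ : Fin n ↦ s), InjOn (fun a ↦ φ n (Fin.snoc v a)) s :=
      injOn_prefixTransform_iff
    _ ↔ ∀ n, ∀ v ∈ univ.pi (fun _ : Fin n ↦ s), ∀ a ∈ s,
        φ n (Fin.snoc v a) = φ n (Fin.snoc v 1) * a :=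
      forall₃_congr fun n v hv ↦ injOn_one_neg_one_iff fun a ha ↦ hφ n _ (snoc_mem_univ_pi.2 ⟨hv, ha⟩)
    _ ↔ _ := (exists_mul_last_iff hφ).symm
end

section
/- Fix n ≥ 1 and for u = (u₁,…,uₙ) ∈ {-1,+1}ⁿ and K a subset of {1,…,n}, define u_{[K]} = max_{k∈K} u_k if K is nonempty and u_{[∅]} = -1. Then every function ψ : {-1,+1}ⁿ → {-1,+1} can be uniquely written as ψ(u) = ∏_{K ⊆ {1,…,n}} u_{[K]}^{β_K} where each β_K ∈ {0,1}, and this representation is unique (i.e., the map from {0,1}-valued families (β_K)_{K⊆{1,…,n}} to functions {-1,+1}ⁿ → {-1,+1} given by this product formula is a bijection). -/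
/-- `u_{[K]}`: the maximum of `u` over the index set `K`, with the convention
`u_{[∅]} = -1`. -/
def uMax {n : ℕ} (u : Fin n → ℤ) (K : Finset (Fin n)) : ℤ :=
  if h : K.Nonempty then K.sup' h u else -1

/-- Sign encoding of `ZMod 2`: `0 ↦ 1`, `1 ↦ -1`. -/
def signOf (b : ZMod 2) : ℤ := if b = 1 then -1 else 1

lemma zmod2_cases : ∀ a : ZMod 2, a = 0 ∨ a = 1 := by decide

lemma signOf_add : ∀ a b : ZMod 2, signOf (a + b) = signOf a * signOf b := by decide

lemma signOf_inj : ∀ a b : ZMod 2, signOf a = signOf b → a = b := by decide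

lemma val_cast_self : ∀ a : ZMod 2, ((a.val : ℕ) : ZMod 2) = a := by decide

lemma signOf_prod {α : Type*} (s : Finset α) (g : α → ZMod 2) :
    ∏ a ∈ s, signOf (g a) = signOf (∑ a ∈ s, g a) := by
  induction s using Finset.cons_induction with
  | empty => simp [signOf]
  | cons a s ha ih => rw [Finset.prod_cons, Finset.sum_cons, signOf_add, ih]

lemma signOf_pow_nat (c : ℕ) (hc : c = 0 ∨ c = 1) (m : ZMod 2) :
    signOf m ^ c = signOf ((c : ZMod 2) * m) := by
  rcases hc with h | h <;> subst h <;> simp [signOf]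

lemma uMax_eq {n : ℕ} (u : Fin n → ℤ) (x : Fin n → ZMod 2)
    (h : ∀ i, u i = signOf (x i)) (K : Finset (Fin n)) :
    uMax u K = signOf (∏ k ∈ K, x k) := by
  unfold uMax
  split_ifs with hK
  · by_cases hall : ∀ k ∈ K, x k = 1
    · have h1 : ∏ k ∈ K, x k = 1 := Finset.prod_eq_one (fun k hk => hall k hk)
      have hs1 : signOf (1 : ZMod 2) = -1 := by decide
      rw [h1, hs1]
      apply le_antisymm
      · exact Finset.sup'_le hK u (fun k hk => by
          rw [h k, hall k hk, hs1])
      · obtain ⟨k, hk⟩ := hK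
        have huk : u k = -1 := by rw [h k, hall k hk, hs1]
        have := Finset.le_sup' u hk
        rw [huk] at this; exact this
    · push_neg at hall
      obtain ⟨k, hk, hxk⟩ := hall
      have hx0 : x k = 0 := (zmod2_cases (x k)).resolve_right hxk
      have h0 : ∏ j ∈ K, x j = 0 := Finset.prod_eq_zero hk hx0
      have hs0 : signOf (0 : ZMod 2) = 1 := by decide
      rw [h0, hs0]
      have huk : u k = 1 := by rw [h k, hx0, hs0]
      apply le_antisymm
      · apply Finset.sup'_le hK u
        intro j hj
        rw [h j]
        rcases zmod2_cases (x j) with hj0 | hj1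
        · simp [signOf, hj0]
        · simp [signOf, hj1]
      · have := Finset.le_sup' u hk
        rw [huk] at this; exact this
  · simp [Finset.not_nonempty_iff_eq_empty.mp hK, signOf]

/-- Algebraic normal form: the Boolean function determined by a family of
coefficients indexed by subsets. -/
def anf {n : ℕ} (β : Finset (Fin n) → ZMod 2) : (Fin n → ZMod 2) → ZMod 2 :=
  fun x => ∑ K : Finset (Fin n), β K * ∏ k ∈ K, x k

lemma anf_indicator {n : ℕ} (β : Finset (Fin n) → ZMod 2) (S : Finset (Fin n)) :
    anf β (fun k => if k ∈ S then 1 else 0) = ∑ K ∈ S.powerset, β K := by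
  unfold anf
  have hprod : ∀ K : Finset (Fin n),
      (∏ k ∈ K, (if k ∈ S then (1 : ZMod 2) else 0)) = if K ⊆ S then 1 else 0 := by
    intro K
    by_cases hKS : K ⊆ S
    · rw [if_pos hKS]
      exact Finset.prod_eq_one (fun k hk => if_pos (hKS hk))
    · rw [if_neg hKS]
      obtain ⟨k, hk, hkS⟩ := Finset.not_subset.mp hKS
      exact Finset.prod_eq_zero hk (if_neg hkS)
  simp only [hprod, mul_ite, mul_one, mul_zero]
  rw [← Finset.sum_filter]
  congr 1
  ext K
  simp [Finset.mem_powerset]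

lemma anf_injective {n : ℕ} : Function.Injective (anf (n := n)) := by
  intro β γ h
  funext S
  induction S using Finset.strongInduction with
  | _ S ih =>
    have hH : ∑ K ∈ S.powerset, β K = ∑ K ∈ S.powerset, γ K := by
      rw [← anf_indicator, ← anf_indicator, h]
    rw [← Finset.add_sum_erase _ β (Finset.mem_powerset_self S),
        ← Finset.add_sum_erase _ γ (Finset.mem_powerset_self S)] at hH
    have hrest : ∑ K ∈ S.powerset.erase S, β K = ∑ K ∈ S.powerset.erase S, γ K := by
      apply Finset.sum_congr rfl
      intro K hK
      have hKm := Finset.mem_erase.mp hK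
      exact ih K (lt_of_le_of_ne (Finset.mem_powerset.mp hKm.2) hKm.1)
    rw [hrest] at hH
    exact add_right_cancel hH

lemma anf_bijective {n : ℕ} : Function.Bijective (anf (n := n)) := by
  rw [Fintype.bijective_iff_injective_and_card]
  refine ⟨anf_injective, ?_⟩
  simp [Fintype.card_fun, Fintype.card_finset]

theorem stmt1 (n : ℕ) (hn : 1 ≤ n) (ψ : (Fin n → ℤ) → ℤ)
    (hψ : ∀ u : Fin n → ℤ, (∀ i, u i = 1 ∨ u i = -1) → ψ u = 1 ∨ ψ u = -1) :
    ∃! β : Finset (Fin n) → ℕ,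
      (∀ K, β K = 0 ∨ β K = 1) ∧
      ∀ u : Fin n → ℤ, (∀ i, u i = 1 ∨ u i = -1) →
        ψ u = ∏ K : Finset (Fin n), (uMax u K) ^ (β K) := by
  classical
  set f : (Fin n → ZMod 2) → ZMod 2 :=
    fun x => if ψ (fun i => signOf (x i)) = -1 then 1 else 0 with hf
  -- sign of f recovers ψ on ±1 vectors
  have hfx : ∀ (u : Fin n → ℤ) (x : Fin n → ZMod 2),
      (∀ i, u i = 1 ∨ u i = -1) → (∀ i, u i = signOf (x i)) →
      signOf (f x) = ψ u := by
    intro u x hu hux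
    have hux' : (fun i => signOf (x i)) = u := funext (fun i => (hux i).symm)
    rw [hf]
    simp only [hux']
    rcases hψ u hu with h | h
    · rw [h, if_neg (by norm_num)]; decide
    · rw [h, if_pos rfl]; decide
  -- key computation: the product formula equals signOf (anf ...)
  have hprodeq : ∀ (γ : Finset (Fin n) → ℕ), (∀ K, γ K = 0 ∨ γ K = 1) →
      ∀ (u : Fin n → ℤ) (x : Fin n → ZMod 2), (∀ i, u i = signOf (x i)) →
      (∏ K : Finset (Fin n), (uMax u K) ^ (γ K)) =
        signOf (anf (fun K => ((γ K : ℕ) : ZMod 2)) x) := by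
    intro γ hγ u x hux
    unfold anf
    rw [← signOf_prod]
    apply Finset.prod_congr rfl
    intro K _
    rw [uMax_eq u x hux K, signOf_pow_nat (γ K) (hγ K)]
  obtain ⟨β', hβ'⟩ := anf_bijective.surjective f
  have hβval : ∀ K, (β' K).val = 0 ∨ (β' K).val = 1 := by
    intro K
    have : ∀ a : ZMod 2, a.val = 0 ∨ a.val = 1 := by decide
    exact this _
  refine ⟨fun K => (β' K).val, ⟨hβval, ?_⟩, ?_⟩
  · intro u hu
    set x : Fin n → ZMod 2 := fun i => if u i = 1 then 0 else 1 with hx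
    have hux : ∀ i, u i = signOf (x i) := by
      intro i
      rcases hu i with h | h
      · simp [hx, h, signOf]
      · rw [hx]; simp only [h]
        rw [if_neg (by norm_num)]
        decide
    rw [hprodeq (fun K => (β' K).val) hβval u x hux]
    have : (fun K => (((β' K).val : ℕ) : ZMod 2)) = β' := funext (fun K => val_cast_self _)
    rw [this, hβ', hfx u x hu hux]
  · intro γ ⟨hγ01, hγeq⟩
    have hanf : anf (fun K => ((γ K : ℕ) : ZMod 2)) = f := by
      funext x
      set u : Fin n → ℤ := fun i => signOf (x i) with hu'
      have hu : ∀ i, u i = 1 ∨ u i = -1 := by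
        intro i
        rcases zmod2_cases (x i) with h | h
        · left; rw [hu']; simp only [h]; decide
        · right; rw [hu']; simp only [h]; decide
      have hux : ∀ i, u i = signOf (x i) := fun i => rfl
      have h1 : ψ u = signOf (anf (fun K => ((γ K : ℕ) : ZMod 2)) x) := by
        rw [hγeq u hu, hprodeq γ hγ01 u x hux]
      have h2 : signOf (f x) = ψ u := hfx u x hu hux
      exact signOf_inj _ _ (by rw [← h1, h2])
    have hkey : (fun K => ((γ K : ℕ) : ZMod 2)) = β' := by
      apply anf_injective
      rw [hanf, hβ']
    funext K
    have hK : ((γ K : ℕ) : ZMod 2) = β' K := congrFun hkey K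
    rcases hγ01 K with h | h
    · rw [h] at hK ⊢
      rw [← hK]
      decide
    · rw [h] at hK ⊢
      rw [← hK]
      decide
end

section
/- For any n and any subsets K, K′ of {1,…,n}, if the functions u ↦ ∏_{K ⊆ {1,…,n}} u_{[K]}^{β_K} and u ↦ ∏_{K ⊆ {1,…,n}} u_{[K]}^{β′_K} agree for all u ∈ {-1,+1}ⁿ, where β_K, β′_K ∈ {0,1}, then β_K = β′_K for every K ⊆ {1,…,n}. -/
lemma neg_one_pow_eq_iff (a b : ℕ) (hab : ((-1 : ℤ)) ^ a = (-1) ^ b) :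
    (a : ZMod 2) = (b : ZMod 2) := by
  rcases Nat.even_or_odd a with ha | ha <;> rcases Nat.even_or_odd b with hb | hb
  · rw [Nat.even_iff] at ha hb
    rw [ZMod.natCast_eq_natCast_iff, Nat.ModEq, ha, hb]
  · exfalso
    rw [ha.neg_one_pow, hb.neg_one_pow] at hab
    norm_num at hab
  · exfalso
    rw [ha.neg_one_pow, hb.neg_one_pow] at hab
    norm_num at hab
  · rw [Nat.odd_iff] at ha hb
    rw [ZMod.natCast_eq_natCast_iff, Nat.ModEq, ha, hb]

theorem stmt2 (n : ℕ) (β β' : Finset (Fin n) → ℕ)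
    (hβ : ∀ K, β K = 0 ∨ β K = 1) (hβ' : ∀ K, β' K = 0 ∨ β' K = 1)
    (h : ∀ u : Fin n → ℤ, (∀ i, u i = 1 ∨ u i = -1) →
      ∏ K : Finset (Fin n), (uMax u K) ^ (β K)
        = ∏ K : Finset (Fin n), (uMax u K) ^ (β' K)) :
    ∀ K : Finset (Fin n), β K = β' K := by
  have key : ∀ S : Finset (Fin n),
      (∑ K ∈ S.powerset, (β K : ZMod 2)) = ∑ K ∈ S.powerset, (β' K : ZMod 2) := by
    intro S
    set u : Fin n → ℤ := fun i => if i ∈ S then -1 else 1 with hu_def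
    have hu := h u (by intro i; by_cases hi : i ∈ S <;> simp [hu_def, hi])
    have hmax : ∀ K : Finset (Fin n), uMax u K = if K ⊆ S then -1 else 1 := by
      intro K
      unfold uMax
      by_cases hK : K.Nonempty
      · rw [dif_pos hK]
        by_cases hKS : K ⊆ S
        · rw [if_pos hKS]
          apply le_antisymm
          · apply Finset.sup'_le; intro i hi; simp [hu_def, hKS hi]
          · obtain ⟨i, hi⟩ := hK
            calc (-1 : ℤ) = u i := by simp [hu_def, hKS hi]
            _ ≤ _ := Finset.le_sup' _ hi
        · rw [if_neg hKS]
          obtain ⟨i, hi, hiS⟩ := Finset.not_subset.mp hKS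
          apply le_antisymm
          · apply Finset.sup'_le; intro j hj
            by_cases hjS : j ∈ S <;> simp [hu_def, hjS]
          · calc (1 : ℤ) = u i := by simp [hu_def, hiS]
            _ ≤ _ := Finset.le_sup' _ hi
      · rw [dif_neg hK]
        rw [Finset.not_nonempty_iff_eq_empty] at hK
        simp [hK]
    have hprod : ∀ γ : Finset (Fin n) → ℕ,
        ∏ K : Finset (Fin n), (uMax u K) ^ (γ K)
          = (-1 : ℤ) ^ (∑ K ∈ S.powerset, γ K) := by
      intro γ
      have h1 : ∀ K : Finset (Fin n),
          (uMax u K) ^ (γ K) = (-1 : ℤ) ^ (if K ⊆ S then γ K else 0) := by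
        intro K
        rw [hmax K]
        by_cases hKS : K ⊆ S <;> simp [hKS]
      rw [Finset.prod_congr rfl (fun K _ => h1 K), Finset.prod_pow_eq_pow_sum]
      congr 1
      rw [Finset.sum_ite, Finset.sum_const_zero, add_zero]
      apply Finset.sum_congr _ (fun _ _ => rfl)
      ext K
      simp [Finset.mem_powerset]
    rw [hprod β, hprod β'] at hu
    have := neg_one_pow_eq_iff _ _ hu
    push_cast at this
    exact this
  have main : ∀ S : Finset (Fin n), (β S : ZMod 2) = (β' S : ZMod 2) := by
    intro S
    induction S using Finset.strongInduction with
    | _ S ih =>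
      have hS : S ∈ S.powerset := Finset.mem_powerset_self S
      have h1 := Finset.add_sum_erase _ (fun K => (β K : ZMod 2)) hS
      have h2 := Finset.add_sum_erase _ (fun K => (β' K : ZMod 2)) hS
      have h3 : ∑ K ∈ S.powerset.erase S, (β K : ZMod 2)
          = ∑ K ∈ S.powerset.erase S, (β' K : ZMod 2) := by
        apply Finset.sum_congr rfl
        intro K hK
        rw [Finset.mem_erase, Finset.mem_powerset] at hK
        exact ih K (lt_of_le_of_ne hK.2 hK.1)
      have := key S
      rw [← h1, ← h2, h3] at this
      exact add_right_cancel this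
  intro K
  have := main K
  rcases hβ K with h0 | h0 <;> rcases hβ' K with h1 | h1 <;>
    simp_all
end

section
/- Let M₁,…,M_m be finite sets of integers and for u : ℕ → {-1,+1} define u_{[M]} = max_{k∈M} u_k for nonempty finite M and u_{[∅]} = -1. Then ∏_{k=1}^m u_{[M_k]} = (1/2)(-1)^m - (1/2) ∑_{k=0}^m (-2)^k ∑_{K ⊆ {1,…,m}, |K| = k} u_{[M_{[K]}]}, where M_{[K]} = ⋃_{j∈K} M_j and M_{[∅]} = ∅. -/
/-- `u_{[M]}`: the maximum of `u` over the finite index set `M ⊆ ℕ`, with the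
convention `u_{[∅]} = -1`. -/
def uMaxN (u : ℕ → ℤ) (M : Finset ℕ) : ℤ :=
  if h : M.Nonempty then M.sup' h u else -1

/-!
Write `u_{[N]} = 1 - 2 x_N`, where `x_N ∈ {0, 1}` indicates that `u = -1` on all of `N`.
The indicator of a union is the product of the indicators, so
`∑_K (-2)^|K| u_{[M_K]} = ∑_K (-2)^|K| - 2 ∑_K (-2)^|K| ∏_{j ∈ K} x_{M_j}`, and both sums
collapse by the binomial expansion of a product: the first to `(1 - 2)^m`, the second to
`∏_j (1 - 2 x_{M_j}) = ∏_j u_{[M_j]}`.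
-/

open Finset

theorem Finset.prod_one_add_mul {ι R : Type*} [CommRing R] (c : R) (f : ι → R) (s : Finset ι) :
    ∏ i ∈ s, (1 + c * f i) = ∑ t ∈ s.powerset, c ^ #t * ∏ i ∈ t, f i := by
  rw [prod_one_add]
  refine sum_congr rfl fun t _ => ?_
  rw [prod_mul_distrib, prod_const]

theorem Finset.sum_range_mul_sum_filter_card_eq {ι R : Type*} [Fintype ι] [CommRing R] {n : ℕ}
    (hn : Fintype.card ι ≤ n) (g : ℕ → R) (f : Finset ι → R) :
    ∑ k ∈ range (n + 1), g k * ∑ K ∈ univ.filter (fun K : Finset ι => #K = k), f K =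
      ∑ K, g #K * f K := by
  simp_rw [mul_sum]
  rw [← sum_fiberwise_of_maps_to (g := card) (t := range (n + 1))
    fun K _ => mem_range_succ_iff.2 ((card_le_univ K).trans hn)]
  refine sum_congr rfl fun k _ => sum_congr rfl fun K hK => ?_
  rw [(mem_filter.1 hK).2]

section

variable {u : ℕ → ℤ} (hu : ∀ k, u k = 1 ∨ u k = -1)
include hu

theorem uMaxN_eq_one_or_neg_one (N : Finset ℕ) : uMaxN u N = 1 ∨ uMaxN u N = -1 := by
  unfold uMaxN
  split_ifs with hN
  · obtain ⟨k, -, hk⟩ := exists_mem_eq_sup' hN u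
    exact hk ▸ hu k
  · exact Or.inr rfl

theorem uMaxN_eq_neg_one_iff (N : Finset ℕ) : uMaxN u N = -1 ↔ ∀ k ∈ N, u k = -1 := by
  unfold uMaxN
  split_ifs with hN
  · obtain ⟨k₀, hk₀, hsup⟩ := exists_mem_eq_sup' hN u
    refine ⟨fun h k hk => ?_, fun h => hsup ▸ h k₀ hk₀⟩
    have := le_sup' u hk
    rcases hu k with h' | h' <;> omega
  · simp [not_nonempty_iff_eq_empty.1 hN]

theorem uMaxN_eq_one_sub_two_mul_ite (N : Finset ℕ) :
    uMaxN u N = 1 - 2 * if ∀ k ∈ N, u k = -1 then 1 else 0 := by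
  split_ifs with h
  · rw [(uMaxN_eq_neg_one_iff hu N).2 h]; norm_num
  · have := (uMaxN_eq_neg_one_iff hu N).not.2 h
    rcases uMaxN_eq_one_or_neg_one hu N with h' | h' <;> omega

theorem sum_powerset_neg_two_pow_mul_uMaxN_sup {ι : Type*} (M : ι → Finset ℕ) (s : Finset ι) :
    ∑ K ∈ s.powerset, (-2) ^ #K * uMaxN u (K.sup M) = (-1) ^ #s - 2 * ∏ j ∈ s, uMaxN u (M j) := by
  have hsup : ∀ K : Finset ι, uMaxN u (K.sup M) =
      1 + -2 * ∏ j ∈ K, if ∀ k ∈ M j, u k = -1 then 1 else 0 := by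
    intro K
    have hall : (∀ k ∈ K.sup M, u k = -1) ↔ ∀ j ∈ K, ∀ k ∈ M j, u k = -1 := by
      simp only [mem_sup]
      grind
    rw [uMaxN_eq_one_sub_two_mul_ite hu, prod_boole]
    simp only [hall]
    ring
  calc ∑ K ∈ s.powerset, (-2) ^ #K * uMaxN u (K.sup M)
      = ∑ K ∈ s.powerset, (-2) ^ #K * ∏ j ∈ K, (1 : ℤ)
        + -2 * ∑ K ∈ s.powerset, (-2) ^ #K * ∏ j ∈ K,
          if ∀ k ∈ M j, u k = -1 then 1 else 0 := by
        rw [mul_sum, ← sum_add_distrib]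
        refine sum_congr rfl fun K _ => ?_
        rw [hsup, prod_const_one]
        ring
    _ = ∏ j ∈ s, (1 + -2 * 1) +
          -2 * ∏ j ∈ s, (1 + -2 * if ∀ k ∈ M j, u k = -1 then 1 else 0) := by
        rw [prod_one_add_mul, prod_one_add_mul]
    _ = (-1) ^ #s - 2 * ∏ j ∈ s, uMaxN u (M j) := by
        simp only [uMaxN_eq_one_sub_two_mul_ite hu, prod_const, neg_mul, ← sub_eq_add_neg]
        ring

end

theorem stmt3 (m : ℕ) (M : Fin m → Finset ℕ) (u : ℕ → ℤ)
    (hu : ∀ k, u k = 1 ∨ u k = -1) :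
    (∏ k, (uMaxN u (M k) : ℚ)) =
      (1 / 2) * (-1) ^ m - (1 / 2) * ∑ k ∈ Finset.range (m + 1), (-2 : ℚ) ^ k *
        ∑ K ∈ Finset.univ.filter (fun K : Finset (Fin m) => K.card = k),
          (uMaxN u (K.sup M) : ℚ) := by
  have key := congrArg (Int.cast : ℤ → ℚ) (sum_powerset_neg_two_pow_mul_uMaxN_sup hu M univ)
  push_cast at key
  rw [sum_range_mul_sum_filter_card_eq (Fintype.card_fin m).le, ← powerset_univ, key, card_univ,
    Fintype.card_fin]
  ring
end

section
/- For a positive integer n, the binomial coefficient C(2n-1, n-1) is odd if and only if n is a power of 2. -/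
/-!
By Kummer's theorem, `v₂ C(2n-1, n-1)` is the number of carries when adding `n - 1` and `n` in
base 2, i.e. `s(n - 1) + s(n) - s(2n - 1)` where `s` is the binary digit sum. Since `2n - 1` is
`n - 1` with a last binary digit `1` appended, this equals `s(n) - 1`, which vanishes exactly
when `n` has a single nonzero binary digit.
-/

namespace Nat

theorem digits_sum_pos {b n : ℕ} (hn : n ≠ 0) : 0 < (b.digits n).sum :=
  (pos_of_ne_zero (getLast_digit_ne_zero b hn)).trans_le (List.le_sum_of_mem (List.getLast_mem _))

theorem digits_sum_eq_one_iff {b n : ℕ} (hb : 1 < b) :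
    (b.digits n).sum = 1 ↔ ∃ k, n = b ^ k := by
  constructor
  · induction n using Nat.strong_induction_on with
    | _ n ih =>
      intro h
      rcases eq_or_ne n 0 with rfl | hn
      · simp at h
      rw [digits_def' hb hn.bot_lt, List.sum_cons] at h
      obtain ⟨hmod, hdiv⟩ | ⟨hmod, hdiv⟩ :
          n % b = 0 ∧ (b.digits (n / b)).sum = 1 ∨ n % b = 1 ∧ (b.digits (n / b)).sum = 0 := by
        omega
      · obtain ⟨k, hk⟩ := ih (n / b) (div_lt_self hn.bot_lt hb) hdiv
        exact ⟨k + 1, by rw [← div_add_mod n b, hmod, hk, pow_succ']; ring⟩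
      · have hquot : n / b = 0 := by_contra fun h ↦ (digits_sum_pos h).ne' hdiv
        exact ⟨0, by rw [← div_add_mod n b, hmod, hquot]; simp⟩
  · rintro ⟨k, rfl⟩
    simpa [digits_of_lt b 1 one_ne_zero hb] using
      congrArg List.sum (digits_base_pow_mul (k := k) hb one_pos)

theorem odd_iff_padicValNat_two_eq_zero {c : ℕ} (hc : c ≠ 0) : Odd c ↔ padicValNat 2 c = 0 := by
  simp [padicValNat.eq_zero_iff, hc, odd_iff, two_dvd_ne_zero]

theorem padicValNat_two_choose_two_mul_sub_one {n : ℕ} (hn : 0 < n) :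
    padicValNat 2 ((2 * n - 1).choose (n - 1)) = (digits 2 n).sum - 1 := by
  have kummer := sub_one_mul_padicValNat_choose_eq_sub_sum_digits (p := 2)
    (show n - 1 ≤ 2 * n - 1 by omega)
  have hdigits : digits 2 (2 * n - 1) = 1 :: digits 2 (n - 1) := by
    convert digits_add 2 one_lt_two 1 (n - 1) one_lt_two (Or.inl one_ne_zero) using 2
    omega
  rw [show 2 * n - 1 - (n - 1) = n by omega, hdigits, List.sum_cons] at kummer
  omega

end Nat

theorem stmt13 (n : ℕ) (hn : 0 < n) :
    Odd ((2 * n - 1).choose (n - 1)) ↔ ∃ k : ℕ, n = 2 ^ k := by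
  have hsum := Nat.digits_sum_pos (b := 2) hn.ne'
  rw [Nat.odd_iff_padicValNat_two_eq_zero (Nat.choose_pos (by omega)).ne',
    Nat.padicValNat_two_choose_two_mul_sub_one hn, ← Nat.digits_sum_eq_one_iff one_lt_two]
  omega
end

section
/- For a positive integer n, (1/2)·C(2n, n) = C(2n-1, n-1); consequently ∑_{k=0}^{n} C(2n, k) = 2^{2n-1} + (1/2)C(2n,n) is even if and only if C(2n-1, n-1) is even, which holds if and only if n is not a power of 2. -/
/-!
Pascal's rule and the symmetry `C(2m+1, m+1) = C(2m+1, m)` give both the halving identity and the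
half-row sum. For the parity, Lucas's theorem at `p = 2` gives `C(2m+1, m) ≡ C(m, ⌊m/2⌋)`: for odd
`m` this is the same problem for `⌊m/2⌋`, and for even `m > 0` it is an even central binomial
coefficient, so `C(2m+1, m)` is odd exactly when `m + 1` is a power of two.
-/
open Finset

namespace Nat

theorem choose_two_mul_add_two_succ (m : ℕ) :
    (2 * m + 2).choose (m + 1) = 2 * (2 * m + 1).choose m := by
  rw [choose_succ_succ, choose_symm_half, two_mul ((2 * m + 1).choose m)]

theorem sum_range_choose_two_mul_add_two_halfway (m : ℕ) :
    ∑ i ∈ range (m + 2), (2 * m + 2).choose i = 2 ^ (2 * m + 1) + (2 * m + 1).choose m := by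
  have hshift : ∑ i ∈ range (m + 1), (2 * m + 1).choose (i + 1) + 1 =
      4 ^ m + (2 * m + 1).choose m := by
    rw [← sum_range_choose_halfway m, ← choose_symm_half, ← sum_range_succ]
    simpa using (sum_range_succ' (fun i => (2 * m + 1).choose i) (m + 1)).symm
  rw [sum_range_succ', choose_zero_right,
    sum_congr rfl fun i _ => choose_succ_succ (2 * m + 1) i, sum_add_distrib, add_assoc, hshift,
    sum_range_choose_halfway, pow_succ, pow_mul]
  norm_num
  ring

theorem choose_two_mul_add_one_modEq_two (n k : ℕ) :
    (2 * n + 1).choose k ≡ n.choose (k / 2) [MOD 2] := by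
  have h := Choose.choose_modEq_choose_mod_mul_choose_div_nat (n := 2 * n + 1) (k := k) (p := 2)
  have hk : (1 : ℕ).choose (k % 2) = 1 := by
    rcases mod_two_eq_zero_or_one k with h | h <;> simp [h]
  rwa [show (2 * n + 1) % 2 = 1 by omega, show (2 * n + 1) / 2 = n by omega, hk, one_mul] at h

theorem exists_two_mul_eq_two_pow_iff (n : ℕ) :
    (∃ j, 2 * n = 2 ^ j) ↔ ∃ j, n = 2 ^ j := by
  constructor
  · rintro ⟨_ | j, hj⟩
    · omega
    · exact ⟨j, by rw [pow_succ] at hj; omega⟩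
  · rintro ⟨j, rfl⟩
    exact ⟨j + 1, by ring⟩

theorem not_exists_two_mul_add_one_eq_two_pow {k : ℕ} (hk : 0 < k) :
    ¬ ∃ j, 2 * k + 1 = 2 ^ j := by
  rintro ⟨_ | j, hj⟩
  · omega
  · rw [pow_succ] at hj
    omega

theorem odd_choose_two_mul_add_one_iff (m : ℕ) :
    Odd ((2 * m + 1).choose m) ↔ ∃ j, m + 1 = 2 ^ j := by
  induction m using Nat.strong_induction_on with
  | _ m ih =>
  rw [odd_iff, choose_two_mul_add_one_modEq_two, ← odd_iff]
  rcases even_or_odd' m with ⟨k, rfl | rfl⟩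
  · rcases eq_zero_or_pos k with rfl | hk
    · exact iff_of_true (by simp) ⟨0, rfl⟩
    · rw [iff_false_intro (not_exists_two_mul_add_one_eq_two_pow hk), iff_false,
        not_odd_iff_even, show 2 * k / 2 = k by omega, ← centralBinom_eq_two_mul_choose]
      exact even_iff_two_dvd.mpr (two_dvd_centralBinom_of_one_le hk)
  · rw [show (2 * k + 1) / 2 = k by omega, show 2 * k + 1 + 1 = 2 * (k + 1) by ring,
      exists_two_mul_eq_two_pow_iff, ← ih k (by omega)]

end Nat

theorem stmt14 (n : ℕ) (hn : 0 < n) :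
    (2 * n).choose n = 2 * (2 * n - 1).choose (n - 1) ∧
    ∑ k ∈ Finset.range (n + 1), (2 * n).choose k
      = 2 ^ (2 * n - 1) + (2 * n - 1).choose (n - 1) ∧
    (Even (∑ k ∈ Finset.range (n + 1), (2 * n).choose k)
      ↔ Even ((2 * n - 1).choose (n - 1))) ∧
    (Even (∑ k ∈ Finset.range (n + 1), (2 * n).choose k)
      ↔ ¬ ∃ j : ℕ, n = 2 ^ j) := by
  obtain ⟨m, rfl⟩ := Nat.exists_eq_add_one_of_ne_zero hn.ne'
  rw [show 2 * (m + 1) - 1 = 2 * m + 1 by omega, Nat.add_sub_cancel,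
    show 2 * (m + 1) = 2 * m + 2 by ring, Nat.sum_range_choose_two_mul_add_two_halfway]
  have hsum_parity : Even (2 ^ (2 * m + 1) + (2 * m + 1).choose m) ↔
      Even ((2 * m + 1).choose m) := by
    rw [Nat.even_add, iff_true_left (Nat.even_pow.mpr ⟨even_two, by omega⟩)]
  refine ⟨Nat.choose_two_mul_add_two_succ m, rfl, hsum_parity, ?_⟩
  rw [hsum_parity, ← Nat.not_odd_iff_even, Nat.odd_choose_two_mul_add_one_iff]
end

section
/- For each n ≥ 1 let ψₙ₋₁ : {-1,+1}^{n-1} → {-1,+1} (with ψ₀ a constant) and define the bijection τₙ : {-1,+1}ⁿ → {-1,+1}ⁿ by τₙ(u₁,…,uₙ) = (v₁,…,vₙ) with v_k = ψ_{k-1}(u₁,…,u_{k-1})·u_k. Suppose τₙ, as a permutation of {-1,+1}ⁿ, is a single cycle of length 2ⁿ. Then τ_{n+1} is a single cycle of length 2^{n+1} if and only if ∏_{u ∈ {-1,+1}ⁿ} ψₙ(u) = -1. -/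
/-!
`τₙ₊₁` acts on the first `n` coordinates as `τₙ`, a single cycle of length `2ⁿ`, so `2ⁿ` steps of
`τₙ₊₁` fix the first `n` coordinates and multiply the last one by `P = ∏ᵤ ψₙ(u)`. If `P = 1`, every
point therefore has period at most `2ⁿ`, too short for a cycle through `2ⁿ⁺¹` points. If `P = -1`
and `τₙ^m` carries the first `n` coordinates of `U` to those of `V`, then `τₙ₊₁^m U` and
`τₙ₊₁^(2ⁿ + m) U` are the two points with these first coordinates, so one of them is `V`.
-/

def cube (n : ℕ) : Finset (Fin n → ℤ) :=
  Fintype.piFinset fun _ => ({-1, 1} : Finset ℤ)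

/-- The bootstrap transformation `τₙ`: `(τₙ u)_k = ψ_{k-1}(u₁,…,u_{k-1})·u_k`
(0-indexed). -/
def tau (ψ : (k : ℕ) → (Fin k → ℤ) → ℤ) (n : ℕ) (u : Fin n → ℤ) : Fin n → ℤ :=
  fun i => ψ i.val (fun j => u ⟨j.val, j.isLt.trans i.isLt⟩) * u i

open Finset Function

section Orbit

variable {α : Type*} [DecidableEq α] {f : α → α} {s : Finset α}

theorem image_iterate_range_minimalPeriod (hf : Set.MapsTo f s s)
    (hs : ∀ x ∈ s, ∀ y ∈ s, ∃ m, f^[m] x = y) {x : α} (hx : x ∈ s) :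
    (range (minimalPeriod f x)).image (f^[·] x) = s := by
  obtain ⟨m, hm⟩ := hs (f x) (hf hx) x hx
  have hpos : 0 < minimalPeriod f x :=
    IsPeriodicPt.minimalPeriod_pos m.succ_pos (by rwa [IsPeriodicPt, IsFixedPt, iterate_succ_apply])
  ext y
  simp only [mem_image, mem_range]
  constructor
  · rintro ⟨j, -, rfl⟩
    exact hf.iterate j hx
  · intro hy
    obtain ⟨j, rfl⟩ := hs x hx y hy
    exact ⟨j % minimalPeriod f x, Nat.mod_lt j hpos, iterate_mod_minimalPeriod_eq⟩

theorem minimalPeriod_eq_card (hf : Set.MapsTo f s s)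
    (hs : ∀ x ∈ s, ∀ y ∈ s, ∃ m, f^[m] x = y) {x : α} (hx : x ∈ s) :
    minimalPeriod f x = #s := by
  rw [← image_iterate_range_minimalPeriod hf hs hx, card_image_of_injOn, card_range]
  simpa only [coe_range] using iterate_injOn_Iio_minimalPeriod

theorem prod_range_minimalPeriod {M : Type*} [CommMonoid M] (g : α → M) (hf : Set.MapsTo f s s)
    (hs : ∀ x ∈ s, ∀ y ∈ s, ∃ m, f^[m] x = y) {x : α} (hx : x ∈ s) :
    ∏ j ∈ range (minimalPeriod f x), g (f^[j] x) = ∏ y ∈ s, g y := by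
  rw [← image_iterate_range_minimalPeriod hf hs hx, prod_image]
  simpa only [coe_range] using iterate_injOn_Iio_minimalPeriod

end Orbit

theorem mem_cube {n : ℕ} {u : Fin n → ℤ} : u ∈ cube n ↔ ∀ i, |u i| = 1 := by
  simp [cube, Fintype.mem_piFinset, abs_eq, or_comm]

theorem init_mem_cube {n : ℕ} {U : Fin (n + 1) → ℤ} (hU : U ∈ cube (n + 1)) :
    Fin.init U ∈ cube n :=
  mem_cube.2 fun _ => mem_cube.1 hU _

theorem card_cube (n : ℕ) : #(cube n) = 2 ^ n := by
  simp [cube, Fintype.card_piFinset]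

variable {ψ : (k : ℕ) → (Fin k → ℤ) → ℤ}

theorem tau_mapsTo (hψ : ∀ k (v : Fin k → ℤ), v ∈ cube k → ψ k v = 1 ∨ ψ k v = -1) (n : ℕ) :
    Set.MapsTo (tau ψ n) (cube n) (cube n) := by
  intro u hu
  rw [Finset.mem_coe, mem_cube] at hu ⊢
  intro i
  have hψi := hψ i _ (mem_cube.2 fun j => hu ⟨j, j.isLt.trans i.isLt⟩)
  rw [tau, abs_mul, hu i, mul_one, abs_eq zero_le_one]
  exact hψi

theorem tau_succ (n : ℕ) (U : Fin (n + 1) → ℤ) :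
    tau ψ (n + 1) U = Fin.snoc (tau ψ n (Fin.init U)) (ψ n (Fin.init U) * U (Fin.last n)) := by
  ext i
  induction i using Fin.lastCases with
  | last => simp only [Fin.snoc_last]; rfl
  | cast j => simp only [Fin.snoc_castSucc]; rfl

theorem tau_succ_iterate (n m : ℕ) (U : Fin (n + 1) → ℤ) :
    (tau ψ (n + 1))^[m] U = Fin.snoc ((tau ψ n)^[m] (Fin.init U))
      ((∏ j ∈ range m, ψ n ((tau ψ n)^[j] (Fin.init U))) * U (Fin.last n)) := by
  induction m with
  | zero => simp
  | succ m ih =>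
    rw [iterate_succ_apply', ih, tau_succ, Fin.init_snoc, Fin.snoc_last, iterate_succ_apply',
      prod_range_succ, mul_comm _ (ψ n _), mul_assoc]

theorem tau_succ_iterate_card (hψ : ∀ k (v : Fin k → ℤ), v ∈ cube k → ψ k v = 1 ∨ ψ k v = -1)
    {n : ℕ} (hcycle : ∀ u ∈ cube n, ∀ v ∈ cube n, ∃ m : ℕ, (tau ψ n)^[m] u = v)
    {U : Fin (n + 1) → ℤ} (hU : Fin.init U ∈ cube n) :
    (tau ψ (n + 1))^[2 ^ n] U = Fin.snoc (Fin.init U) ((∏ u ∈ cube n, ψ n u) * U (Fin.last n)) := by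
  have hperiod := minimalPeriod_eq_card (tau_mapsTo hψ n) hcycle hU
  rw [card_cube] at hperiod
  rw [tau_succ_iterate, ← hperiod, iterate_minimalPeriod,
    prod_range_minimalPeriod _ (tau_mapsTo hψ n) hcycle hU]

theorem prod_eq_neg_one_of_tau_succ_transitive
    (hψ : ∀ k (v : Fin k → ℤ), v ∈ cube k → ψ k v = 1 ∨ ψ k v = -1)
    {n : ℕ} (hcycle : ∀ u ∈ cube n, ∀ v ∈ cube n, ∃ m : ℕ, (tau ψ n)^[m] u = v)
    (hcycle' : ∀ u ∈ cube (n + 1), ∀ v ∈ cube (n + 1), ∃ m : ℕ, (tau ψ (n + 1))^[m] u = v) :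
    ∏ u ∈ cube n, ψ n u = -1 := by
  have hP : |∏ u ∈ cube n, ψ n u| = 1 := by
    rw [abs_prod]
    exact prod_eq_one fun v hv => (abs_eq zero_le_one).2 (hψ n v hv)
  refine ((abs_eq zero_le_one).1 hP).resolve_left fun hP1 => ?_
  have hU : (fun _ => 1 : Fin (n + 1) → ℤ) ∈ cube (n + 1) := mem_cube.2 fun _ => abs_one
  have hfix : IsPeriodicPt (tau ψ (n + 1)) (2 ^ n) (fun _ => 1) := by
    rw [IsPeriodicPt, IsFixedPt, tau_succ_iterate_card hψ hcycle (init_mem_cube hU), hP1, one_mul,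
      Fin.snoc_init_self]
  have hle := hfix.minimalPeriod_le (by positivity)
  rw [minimalPeriod_eq_card (tau_mapsTo hψ _) hcycle' hU, card_cube, pow_succ] at hle
  have : 0 < 2 ^ n := by positivity
  omega

theorem tau_succ_transitive_of_prod_eq_neg_one
    (hψ : ∀ k (v : Fin k → ℤ), v ∈ cube k → ψ k v = 1 ∨ ψ k v = -1)
    {n : ℕ} (hcycle : ∀ u ∈ cube n, ∀ v ∈ cube n, ∃ m : ℕ, (tau ψ n)^[m] u = v)
    (hP : ∏ u ∈ cube n, ψ n u = -1) :
    ∀ U ∈ cube (n + 1), ∀ V ∈ cube (n + 1), ∃ m : ℕ, (tau ψ (n + 1))^[m] U = V := by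
  intro U hU V hV
  obtain ⟨m, hm⟩ := hcycle _ (init_mem_cube hU) _ (init_mem_cube hV)
  set S := ∏ j ∈ range m, ψ n ((tau ψ n)^[j] (Fin.init U))
  have hreach (W : Fin (n + 1) → ℤ) (hW : Fin.init W = Fin.init U) :
      (tau ψ (n + 1))^[m] W = Fin.snoc (Fin.init V) (S * W (Fin.last n)) := by
    rw [tau_succ_iterate, hW, hm]
  have hS : |S * U (Fin.last n)| = |V (Fin.last n)| := by
    have hiter j := (tau_mapsTo hψ n).iterate j (init_mem_cube hU)
    rw [abs_mul, abs_prod, prod_eq_one fun j _ => (abs_eq zero_le_one).2 (hψ n _ (hiter j)),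
      mem_cube.1 hU, mem_cube.1 hV, one_mul]
  rcases abs_eq_abs.1 hS with h | h
  · exact ⟨m, by rw [hreach U rfl, h, Fin.snoc_init_self]⟩
  · have hflip : S * (-1 * U (Fin.last n)) = V (Fin.last n) := by linear_combination -h
    refine ⟨m + 2 ^ n, ?_⟩
    rw [iterate_add_apply, tau_succ_iterate_card hψ hcycle (init_mem_cube hU),
      hreach _ (Fin.init_snoc _ _), Fin.snoc_last, hP, hflip, Fin.snoc_init_self]

theorem stmt15 (n : ℕ) (ψ : (k : ℕ) → (Fin k → ℤ) → ℤ)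
    (hψ : ∀ k (v : Fin k → ℤ), v ∈ cube k → ψ k v = 1 ∨ ψ k v = -1)
    (hcycle : ∀ u ∈ cube n, ∀ v ∈ cube n, ∃ m : ℕ, (tau ψ n)^[m] u = v) :
    (∀ u ∈ cube (n + 1), ∀ v ∈ cube (n + 1), ∃ m : ℕ, (tau ψ (n + 1))^[m] u = v)
      ↔ ∏ u ∈ cube n, ψ n u = -1 :=
  ⟨prod_eq_neg_one_of_tau_succ_transitive hψ hcycle,
    tau_succ_transitive_of_prod_eq_neg_one hψ hcycle⟩
end

section
/- Define sgn with sgn(s) = 1 for s > 0 and sgn(s) = -1 for s ≤ 0. For n ≥ 2, ∏_{u ∈ {-1,+1}ⁿ} sgn(u₁ + … + uₙ) equals (-1)^{∑_{k=0}^{⌊n/2⌋} C(n,k)} when n is even and (-1)^{2^{n-1}} = 1 when n is odd; hence for odd n ≥ 3 the product is +1, and for even n = 2m the product is -1 if and only if m is a power of 2. -/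
/-- Sign function with the convention `sgn s = -1` for `s ≤ 0`. -/
def sgn (s : ℤ) : ℤ := if 0 < s then 1 else -1

open Finset

lemma sum_pm {n : ℕ} (T : Finset (Fin n)) :
    ∑ i : Fin n, (if i ∈ T then (-1:ℤ) else 1) = (n : ℤ) - 2 * T.card := by
  calc ∑ i : Fin n, (if i ∈ T then (-1:ℤ) else 1)
      = ∑ i : Fin n, ((1:ℤ) - 2 * (if i ∈ T then (1:ℤ) else 0)) := by
        apply Finset.sum_congr rfl; intros; split <;> ring
    _ = (n : ℤ) - 2 * T.card := by
        rw [Finset.sum_sub_distrib, ← Finset.mul_sum]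
        simp [Finset.sum_ite_mem]

lemma cube_prod_eq (n : ℕ) :
    ∏ u ∈ cube n, sgn (∑ i, u i)
      = ∏ S ∈ (univ : Finset (Fin n)).powerset, sgn ((n : ℤ) - 2 * S.card) := by
  refine Finset.prod_nbij' (fun u => univ.filter fun i => u i = -1)
    (fun S => fun i => if i ∈ S then -1 else 1) ?_ ?_ ?_ ?_ ?_
  · intro u _; exact mem_powerset.2 (filter_subset _ _)
  · intro S _
    rw [cube, Fintype.mem_piFinset]
    intro i; by_cases h : i ∈ S <;> simp [h]
  · intro u hu
    funext i
    have : u i = -1 ∨ u i = 1 := by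
      have := (Fintype.mem_piFinset).1 hu i
      simpa using this
    rcases this with h | h <;> simp [h]
  · intro S _
    ext i
    simp only [mem_filter, mem_univ, true_and]
    split <;> simp_all
  · intro u hu
    congr 1
    have key : ∀ i, u i = (if i ∈ univ.filter (fun i => u i = -1) then (-1:ℤ) else 1) := by
      intro i
      have : u i = -1 ∨ u i = 1 := by
        have := (Fintype.mem_piFinset).1 hu i
        simpa using this
      rcases this with h | h <;> simp [h]
    rw [Finset.sum_congr rfl fun i _ => key i, sum_pm]

lemma cube_prod_eq2 (n : ℕ) :
    ∏ u ∈ cube n, sgn (∑ i, u i)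
      = ∏ k ∈ range (n + 1), sgn ((n : ℤ) - 2 * k) ^ n.choose k := by
  rw [cube_prod_eq, Finset.prod_powerset]
  rw [card_univ, Fintype.card_fin]
  refine Finset.prod_congr rfl fun k _ => ?_
  rw [Finset.prod_congr rfl (fun S hS => ?_), Finset.prod_const,
    Finset.card_powersetCard, card_univ, Fintype.card_fin]
  rw [(Finset.mem_powersetCard.1 hS).2]

lemma cube_prod_eq3 (n : ℕ) :
    ∏ u ∈ cube n, sgn (∑ i, u i)
      = (-1 : ℤ) ^ (∑ k ∈ (range (n + 1)).filter (fun k => n ≤ 2 * k), n.choose k) := by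
  rw [cube_prod_eq2, ← Finset.prod_filter_mul_prod_filter_not (range (n+1)) (fun k => n ≤ 2 * k)]
  have h1 : ∏ k ∈ (range (n+1)).filter (fun k => n ≤ 2 * k),
      sgn ((n : ℤ) - 2 * k) ^ n.choose k
      = (-1 : ℤ) ^ (∑ k ∈ (range (n + 1)).filter (fun k => n ≤ 2 * k), n.choose k) := by
    rw [← Finset.prod_pow_eq_pow_sum]
    refine Finset.prod_congr rfl fun k hk => ?_
    have h := (Finset.mem_filter.1 hk).2
    have h' : ¬ (0 < (n : ℤ) - 2 * k) := by omega
    rw [sgn, if_neg h']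
  have h2 : ∏ k ∈ (range (n+1)).filter (fun k => ¬ n ≤ 2 * k),
      sgn ((n : ℤ) - 2 * k) ^ n.choose k = 1 := by
    refine Finset.prod_eq_one fun k hk => ?_
    have h := (Finset.mem_filter.1 hk).2
    have h' : (0 < (n : ℤ) - 2 * k) := by omega
    rw [sgn, if_pos h', one_pow]
  rw [h1, h2, mul_one]

lemma upper_eq_lower (m : ℕ) :
    ∑ k ∈ Ico m (2*m+1), (2*m).choose k = ∑ k ∈ range (m+1), (2*m).choose k := by
  refine Finset.sum_nbij' (fun k => 2*m-k) (fun k => 2*m-k) ?_ ?_ ?_ ?_ ?_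
  · intro k hk; simp only [mem_Ico, mem_range] at *; omega
  · intro k hk; simp only [mem_Ico, mem_range] at *; omega
  · intro k hk; simp only [mem_Ico] at hk; omega
  · intro k hk; simp only [mem_range] at hk; omega
  · intro k hk
    simp only [mem_Ico] at hk
    exact (Nat.choose_symm (by omega)).symm

lemma central_eq (m : ℕ) (hm : 1 ≤ m) :
    (2*m).choose m = 2 * ((2*m-1).choose (m-1)) := by
  obtain ⟨a, rfl⟩ : ∃ a, m = a + 1 := ⟨m - 1, by omega⟩
  have h2 : 2 * (a+1) - 1 = 2*a+1 := by omega
  have h3 : a + 1 - 1 = a := by omega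
  rw [h2, h3]
  have h1 : 2 * (a+1) = (2*a+1) + 1 := by ring
  rw [h1, Nat.choose_succ_succ]
  have h4 : (2*a+1).choose (a+1) = (2*a+1).choose a := by
    have := Nat.choose_symm (show a+1 ≤ 2*a+1 by omega)
    have h5 : 2*a+1 - (a+1) = a := by omega
    rw [h5] at this; exact this.symm
  rw [h4]; ring

lemma S2_eq (m : ℕ) (hm : 1 ≤ m) :
    ∑ k ∈ range (m+1), (2*m).choose k = 2^(2*m-1) + (2*m-1).choose (m-1) := by
  have h1 : ∑ k ∈ Ico m (2*m+1), (2*m).choose k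
      = (2*m).choose m + ∑ k ∈ Ico (m+1) (2*m+1), (2*m).choose k :=
    Finset.sum_eq_sum_Ico_succ_bot (by omega) _
  have h2 : (∑ k ∈ Ico 0 (m+1), (2*m).choose k) + ∑ k ∈ Ico (m+1) (2*m+1), (2*m).choose k
      = ∑ k ∈ Ico 0 (2*m+1), (2*m).choose k :=
    Finset.sum_Ico_consecutive _ (by omega) (by omega)
  have h3 : ∑ k ∈ Ico 0 (2*m+1), (2*m).choose k = 2^(2*m) := by
    rw [← Finset.range_eq_Ico]; exact Nat.sum_range_choose (2*m)
  have h4 := central_eq m hm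
  have h5 := upper_eq_lower m
  have h6 : (2:ℕ)^(2*m) = 2 * 2^(2*m-1) := by
    rw [← pow_succ']; congr 1; omega
  simp only [← Finset.range_eq_Ico] at h2 h3
  omega

lemma lucas2 (n k : ℕ) :
    n.choose k % 2 = ((n % 2).choose (k % 2) * ((n / 2).choose (k / 2))) % 2 :=
  @Choose.choose_modEq_choose_mod_mul_choose_div_nat n k 2 ⟨Nat.prime_two⟩

lemma key_parity : ∀ m : ℕ, 1 ≤ m → ((2*m-1).choose (m-1) % 2 = 1 ↔ ∃ j : ℕ, m = 2^j) := by
  intro m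
  induction m using Nat.strong_induction_on with
  | _ m ih =>
    intro hm
    rcases eq_or_lt_of_le hm with h1 | h2
    · simp [← h1]
      exact ⟨0, rfl⟩
    · rcases Nat.even_or_odd m with ⟨t, ht⟩ | ⟨t, ht⟩
      · -- m = 2t, t ≥ 1
        have ht' : m = 2 * t := by omega
        have htpos : 1 ≤ t := by omega
        have hlt : t < m := by omega
        have hl := lucas2 (2*m-1) (m-1)
        have e1 : (2*m-1) % 2 = 1 := by omega
        have e2 : (m-1) % 2 = 1 := by omega
        have e3 : (2*m-1) / 2 = 2*t-1 := by omega
        have e4 : (m-1) / 2 = t-1 := by omega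
        rw [e1, e2, e3, e4] at hl
        simp only [Nat.choose_self, one_mul] at hl
        rw [hl, ih t hlt htpos]
        constructor
        · rintro ⟨j, rfl⟩; exact ⟨j+1, by rw [ht']; ring⟩
        · rintro ⟨j, hj⟩
          rcases j with _ | j
          · omega
          · exact ⟨j, by rw [pow_succ] at hj; omega⟩
      · -- m = 2t+1, odd. If m > 1 then t ≥ 1 and choose is even, RHS false.
        have htpos : 1 ≤ t := by omega
        have hl := lucas2 (2*m-1) (m-1)
        have e1 : (2*m-1) % 2 = 1 := by omega
        have e2 : (m-1) % 2 = 0 := by omega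
        have e3 : (2*m-1) / 2 = 2*t := by omega
        have e4 : (m-1) / 2 = t := by omega
        rw [e1, e2, e3, e4] at hl
        simp only [Nat.choose_zero_right, Nat.choose_one_right, one_mul] at hl
        have hc := central_eq t htpos
        constructor
        · intro h; omega
        · rintro ⟨j, hj⟩
          rcases j with _ | j
          · omega
          · exfalso
            have : (2:ℕ)^(j+1) = 2 * 2^j := by ring
            omega

lemma prod_even (m : ℕ) :
    ∏ u ∈ cube (2*m), sgn (∑ i, u i)
      = (-1 : ℤ) ^ (∑ k ∈ Finset.range (m + 1), (2 * m).choose k) := by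
  rw [cube_prod_eq3]
  congr 1
  have hfil : (range (2*m + 1)).filter (fun k => 2*m ≤ 2 * k) = Ico m (2*m+1) := by
    ext k; simp only [mem_filter, mem_range, mem_Ico]; omega
  rw [hfil, upper_eq_lower]

theorem stmt17 :
    (∀ n : ℕ, 2 ≤ n → Odd n → ∏ u ∈ cube n, sgn (∑ i, u i) = 1) ∧
    (∀ m : ℕ, 0 < m →
      ∏ u ∈ cube (2 * m), sgn (∑ i, u i)
        = (-1 : ℤ) ^ (∑ k ∈ Finset.range (m + 1), (2 * m).choose k)) ∧
    (∀ m : ℕ, 0 < m →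
      ((∏ u ∈ cube (2 * m), sgn (∑ i, u i)) = -1 ↔ ∃ j : ℕ, m = 2 ^ j)) := by
  refine ⟨?_, fun m _ => prod_even m, ?_⟩
  · intro n hn ⟨t, ht⟩
    have htpos : 1 ≤ t := by omega
    rw [cube_prod_eq3]
    have hfil : (range (n + 1)).filter (fun k => n ≤ 2 * k) = Ico (t+1) (2*t+2) := by
      ext k; simp only [mem_filter, mem_range, mem_Ico]; omega
    have hsum : ∑ k ∈ Ico (t+1) (2*t+2), n.choose k = 4^t := by
      have h2 : (∑ k ∈ Ico 0 (t+1), n.choose k) + ∑ k ∈ Ico (t+1) (2*t+2), n.choose k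
          = ∑ k ∈ Ico 0 (2*t+2), n.choose k :=
        Finset.sum_Ico_consecutive _ (by omega) (by omega)
      simp only [← Finset.range_eq_Ico] at h2
      have h3 : ∑ k ∈ range (2*t+2), n.choose k = 2^(2*t+1) := by
        rw [ht]
        exact Nat.sum_range_choose (2*t+1)
      have h4 : ∑ k ∈ range (t+1), n.choose k = 4^t := by
        rw [ht]
        exact Nat.sum_range_choose_halfway t
      have h5 : (2:ℕ)^(2*t+1) = 2 * 4^t := by
        rw [pow_succ, pow_mul]; ring
      omega
    rw [hfil, hsum]
    have heven : Even (4^t) := by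
      rw [Nat.even_pow]
      exact ⟨by decide, by omega⟩
    exact heven.neg_one_pow
  · intro m hm
    rw [prod_even m]
    have hiff : (-1 : ℤ) ^ (∑ k ∈ Finset.range (m + 1), (2 * m).choose k) = -1
        ↔ Odd (∑ k ∈ Finset.range (m + 1), (2 * m).choose k) := by
      constructor
      · intro h
        by_contra hodd
        rw [Nat.not_odd_iff_even] at hodd
        rw [hodd.neg_one_pow] at h
        norm_num at h
      · intro h; exact h.neg_one_pow
    rw [hiff, Nat.odd_iff, S2_eq m hm, ← key_parity m hm]
    have : Even ((2:ℕ)^(2*m-1)) := by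
      rw [Nat.even_pow]; exact ⟨by decide, by omega⟩
    obtain ⟨c, hc⟩ := this
    omega
end
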